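/- Let k be an algebraically closed field of characteristic zero, V a finite-dimensional k-vector space with a nondegenerate symmetric bilinear form B, and e ∈ End(V) a nilpotent endomorphism satisfying B(e·v, w) = B(v, e·w) for all v,w ∈ V. Set m := dim Ker(e). Then there exist vectors w₁,…,w_m ∈ V and integers d₁,…,d_m ≥ 0 such that e^{d_i+1}·w_i = 0, the vectors {e^s·w_i : 1 ≤ i ≤ m, 0 ≤ s ≤ d_i} form a basis of V, B(V_i, V_j) = 0 for i ≠ j, and the restriction of B to each V_i is nondegenerate, where V_i := span{e^s·w_i : 0 ≤ s ≤ d_i}. -/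

import Mathlib

/-!
Induction on dimension. Let `W` be an `e`-stable subspace on which `B` is nondegenerate and let
`d + 1` be the nilpotency order of `e` on `W`. The operator `e ^ d` is `B`-self-adjoint and
nonzero on `W`, so, since `B` is symmetric and `2 ≠ 0`, polarization gives `w ∈ W` with
`B w (e ^ d w) ≠ 0`. The Gram matrix `B (e ^ t w) (e ^ s w) = B w (e ^ (t + s) w)` of the chain
`w, …, e ^ d w` is then anti-triangular with nonzero anti-diagonal, so the chain spans a
nondegenerate `e`-stable block `W₀`, and `W = W₀ ⊕ (W ∩ W₀ᗮ)` with the second summand again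
`e`-stable and nondegenerate. Each chain meets `ker e` in its top vector only, which by
rank-nullity makes the number of chains `dim ker e`.
-/

open Module Submodule

theorem iSup_fin_succ {α : Type*} [CompleteLattice α] {m : ℕ} (f : Fin (m + 1) → α) :
    ⨆ i, f i = f 0 ⊔ ⨆ i : Fin m, f i.succ := by
  rw [← (finSuccEquiv m).symm.iSup_comp, iSup_option]
  simp

theorem LinearMap.IsSelfAdjoint.pow {R M N : Type*} [CommSemiring R] [AddCommMonoid M]
    [Module R M] [AddCommMonoid N] [Module R N] {B : M →ₗ[R] M →ₗ[R] N} {f : Module.End R M}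
    (hf : B.IsSelfAdjoint f) (n : ℕ) : B.IsSelfAdjoint ⇑(f ^ n) := by
  induction n with
  | zero => exact LinearMap.isAdjointPair_one
  | succ n ih =>
    unfold LinearMap.IsSelfAdjoint
    simpa only [← pow_succ, ← pow_succ'] using ih.mul hf

namespace LinearMap.BilinForm

variable {k V : Type*} [Field k] [AddCommGroup V] [Module k V] {B : LinearMap.BilinForm k V}

theorem orthogonal_mem_invtSubmodule {e : Module.End k V} (he : B.IsSelfAdjoint e)
    {W : Submodule k V} (hW : W ∈ e.invtSubmodule) : B.orthogonal W ∈ e.invtSubmodule := by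
  intro v hv n hn
  change B n (e v) = 0
  rw [← he]
  exact hv _ (hW hn)

theorem sup_inf_orthogonal_eq [FiniteDimensional k V] (hB : B.IsRefl) {W₀ W : Submodule k V}
    (hle : W₀ ≤ W) (hW₀ : Disjoint W₀ (B.orthogonal W₀)) : W₀ ⊔ W ⊓ B.orthogonal W₀ = W := by
  rw [inf_comm, ← sup_inf_assoc_of_le _ hle,
    ((isCompl_orthogonal_iff_disjoint hB).mpr hW₀).sup_eq_top, top_inf_eq]

theorem disjoint_inf_orthogonal [FiniteDimensional k V] (hB : B.IsRefl) {W₀ W : Submodule k V}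
    (hle : W₀ ≤ W) (hW₀ : Disjoint W₀ (B.orthogonal W₀)) (hW : Disjoint W (B.orthogonal W)) :
    Disjoint (W ⊓ B.orthogonal W₀) (B.orthogonal (W ⊓ B.orthogonal W₀)) := by
  refine disjoint_def.mpr fun v hv hvB => disjoint_def.mp hW v (mem_inf.mp hv).1 ?_
  rw [← sup_inf_orthogonal_eq hB hle hW₀]
  intro n hn
  obtain ⟨a, ha, b, hb, rfl⟩ := mem_sup.mp hn
  rw [map_add, LinearMap.add_apply, (mem_inf.mp hv).2 a ha, hvB b hb, add_zero]

theorem finrank_inf_orthogonal_lt [FiniteDimensional k V] {W₀ W : Submodule k V}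
    (hle : W₀ ≤ W) (hW₀ : Disjoint W₀ (B.orthogonal W₀)) (hne : W₀ ≠ ⊥) :
    finrank k ↥(W ⊓ B.orthogonal W₀) < finrank k W :=
  Submodule.finrank_lt_finrank_of_lt <| lt_of_le_of_ne inf_le_left fun h =>
    hne (hW₀.eq_bot_of_le (hle.trans (h ▸ inf_le_right)))

theorem exists_apply_self_ne_zero_of_isSelfAdjoint (hB : B.IsSymm) (htwo : (2 : k) ≠ 0)
    {f : Module.End k V} (hf : B.IsSelfAdjoint f) {W : Submodule k V}
    (hW : Disjoint W (B.orthogonal W)) {v : V} (hv : v ∈ W) (hfv : f v ∈ W) (hne : f v ≠ 0) :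
    ∃ w ∈ W, B w (f w) ≠ 0 := by
  obtain ⟨u, hu, hBu⟩ : ∃ u ∈ W, B u (f v) ≠ 0 := by
    by_contra! h
    exact hne (disjoint_def.mp hW _ hfv h)
  by_contra! h
  have hpolar : B (v + u) (f (v + u)) = B v (f v) + 2 * B u (f v) + B u (f u) := by
    rw [map_add, map_add, LinearMap.add_apply, map_add, map_add, ← hf v u, hB.eq (f v) u]
    ring
  rw [h v hv, h u hu, h _ (add_mem hv hu)] at hpolar
  exact hBu (by simpa [htwo] using hpolar)

end LinearMap.BilinForm

namespace Module.End

section Semiring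

variable {R M : Type*} [Semiring R] [AddCommMonoid M] [Module R M] {e : Module.End R M}

def cyclicSpan (e : Module.End R M) (w : M) (d : ℕ) : Submodule R M :=
  span R (Set.range fun s : Fin (d + 1) => (e ^ (s : ℕ)) w)

def cyclicFamily {ι : Type*} (e : Module.End R M) (w : ι → M) (d : ι → ℕ) :
    (Σ i, Fin (d i + 1)) → M :=
  fun p => (e ^ (p.2 : ℕ)) (w p.1)

theorem pow_succ_apply' (n : ℕ) (v : M) : (e ^ (n + 1)) v = e ((e ^ n) v) := by
  rw [pow_succ', mul_apply]

theorem pow_apply_eq_zero_of_le {w : M} {d n : ℕ} (h1 : (e ^ (d + 1)) w = 0) (hn : d + 1 ≤ n) :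
    (e ^ n) w = 0 := by
  rw [← Nat.sub_add_cancel hn, pow_add, mul_apply, h1, map_zero]

theorem pow_apply_mem_of_mem_invtSubmodule {W : Submodule R M} (hW : W ∈ e.invtSubmodule)
    {v : M} (hv : v ∈ W) (n : ℕ) : (e ^ n) v ∈ W := by
  rw [pow_apply]
  exact ((mem_invtSubmodule_iff_mapsTo e).mp hW).iterate n hv

theorem pow_apply_mem_cyclicSpan {w : M} {d : ℕ} (h1 : (e ^ (d + 1)) w = 0) (s : ℕ) :
    (e ^ s) w ∈ e.cyclicSpan w d := by
  rcases le_or_gt s d with hs | hs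
  · exact subset_span ⟨⟨s, Nat.lt_succ_of_le hs⟩, rfl⟩
  · rw [pow_apply_eq_zero_of_le h1 hs]
    exact zero_mem _

theorem cyclicSpan_mem_invtSubmodule {w : M} {d : ℕ} (h1 : (e ^ (d + 1)) w = 0) :
    e.cyclicSpan w d ∈ e.invtSubmodule := by
  refine span_le.mpr ?_
  rintro _ ⟨s, rfl⟩
  simpa only [SetLike.mem_coe, mem_comap, ← pow_succ_apply'] using pow_apply_mem_cyclicSpan h1 _

theorem cyclicSpan_le {W : Submodule R M} (hW : W ∈ e.invtSubmodule) {w : M} (hw : w ∈ W)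
    (d : ℕ) : e.cyclicSpan w d ≤ W := by
  refine span_le.mpr ?_
  rintro _ ⟨s, rfl⟩
  exact pow_apply_mem_of_mem_invtSubmodule hW hw s

theorem span_setOf_pow_apply_eq_cyclicSpan (w : M) (d : ℕ) :
    span R {x : M | ∃ s : ℕ, s ≤ d ∧ x = (e ^ s) w} = e.cyclicSpan w d := by
  congr 1
  ext x
  constructor
  · rintro ⟨s, hs, rfl⟩
    exact ⟨⟨s, Nat.lt_succ_of_le hs⟩, rfl⟩
  · rintro ⟨s, rfl⟩
    exact ⟨s, Nat.le_of_lt_succ s.isLt, rfl⟩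

theorem span_range_cyclicFamily {ι : Type*} (w : ι → M) (d : ι → ℕ) :
    span R (Set.range (e.cyclicFamily w d)) = ⨆ i, e.cyclicSpan (w i) (d i) := by
  rw [Set.range_sigma_eq_iUnion_range, span_iUnion]
  rfl

theorem exists_pow_succ_apply_eq_zero_of_ne_bot (hnil : IsNilpotent e) {W : Submodule R M}
    (hW : W ≠ ⊥) : ∃ d, (∀ v ∈ W, (e ^ (d + 1)) v = 0) ∧ ∃ v ∈ W, (e ^ d) v ≠ 0 := by
  classical
  have hex : ∃ n, ∀ v ∈ W, (e ^ n) v = 0 :=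
    hnil.imp fun n hn v _ => by rw [hn, LinearMap.zero_apply]
  have hpos : Nat.find hex ≠ 0 := fun h0 =>
    hW <| (Submodule.eq_bot_iff _).mpr fun v hv => by
      simpa [h0] using Nat.find_spec hex v hv
  obtain ⟨d, hd⟩ := Nat.exists_eq_add_one_of_ne_zero hpos
  refine ⟨d, hd ▸ Nat.find_spec hex, ?_⟩
  simpa using Nat.find_min hex (hd ▸ d.lt_add_one)

end Semiring

variable {k V : Type*} [Field k] [AddCommGroup V] [Module k V]
  {B : LinearMap.BilinForm k V} {e : Module.End k V}

open LinearMap.BilinForm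

/-- The Gram matrix `B (e ^ t w) (e ^ s w) = B w (e ^ (t + s) w)` of the chain is anti-triangular
with nonzero anti-diagonal: pairing with `e ^ (d - r) w` isolates the coefficient `a r` once the
earlier ones are known to vanish. -/
theorem eq_zero_of_forall_apply_pow_sum_eq_zero (he : B.IsSelfAdjoint e) {w : V} {d : ℕ}
    (h1 : (e ^ (d + 1)) w = 0) (h2 : B w ((e ^ d) w) ≠ 0) {a : Fin (d + 1) → k}
    (ha : ∀ t : ℕ, B ((e ^ t) w) (∑ s, a s • (e ^ (s : ℕ)) w) = 0) : a = 0 := by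
  have hgram (t s : ℕ) : B ((e ^ t) w) ((e ^ s) w) = B w ((e ^ (t + s)) w) := by
    rw [he.pow t, ← mul_apply, ← pow_add]
  funext ⟨r, hr⟩
  induction r using Nat.strong_induction_on with
  | _ r ih =>
  have hsum := ha (d - r)
  simp only [map_sum, map_smul, smul_eq_mul, hgram] at hsum
  rw [Finset.sum_eq_single ⟨r, hr⟩] at hsum
  · simpa [Nat.sub_add_cancel (Nat.le_of_lt_succ hr), h2] using hsum
  · rintro ⟨s, hs⟩ - hne
    rcases lt_or_gt_of_ne (fun h => hne (Fin.ext h) : s ≠ r) with hlt | hgt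
    · simp [ih s hlt hs]
    · simp [pow_apply_eq_zero_of_le h1 (by omega : d + 1 ≤ d - r + s)]
  · simp

theorem disjoint_cyclicSpan_orthogonal (he : B.IsSelfAdjoint e) {w : V} {d : ℕ}
    (h1 : (e ^ (d + 1)) w = 0) (h2 : B w ((e ^ d) w) ≠ 0) :
    Disjoint (e.cyclicSpan w d) (B.orthogonal (e.cyclicSpan w d)) := by
  refine disjoint_def.mpr fun v hv hvB => ?_
  obtain ⟨a, rfl⟩ := (mem_span_range_iff_exists_fun k).mp hv
  have ha : a = 0 := eq_zero_of_forall_apply_pow_sum_eq_zero he h1 h2 fun t =>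
    hvB _ (pow_apply_mem_cyclicSpan h1 t)
  simp [ha]

theorem linearIndependent_cyclicFamily {ι : Type*} [Fintype ι] (he : B.IsSelfAdjoint e)
    {w : ι → V} {d : ι → ℕ} (h1 : ∀ i, (e ^ (d i + 1)) (w i) = 0)
    (h2 : ∀ i, B (w i) ((e ^ d i) (w i)) ≠ 0)
    (horth : ∀ i j, i ≠ j → ∀ s t : ℕ, B ((e ^ s) (w i)) ((e ^ t) (w j)) = 0) :
    LinearIndependent k (e.cyclicFamily w d) := by
  classical
  refine Fintype.linearIndependent_iff.mpr fun g hg ⟨j, r⟩ => ?_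
  suffices (fun s => g ⟨j, s⟩) = 0 from congrFun this r
  refine eq_zero_of_forall_apply_pow_sum_eq_zero he (h1 j) (h2 j) fun t => ?_
  have hpair := congrArg (B ((e ^ t) (w j))) hg
  rw [map_zero, Fintype.sum_sigma, map_sum, Finset.sum_eq_single j] at hpair
  · simpa only [cyclicFamily, map_sum] using hpair
  · intro i _ hij
    simp [cyclicFamily, horth j i (Ne.symm hij)]
  · simp

/-- The tops `e ^ d i (w i)` of the chains span a subspace of `ker e` and the vectors
`e (e ^ s (w i))`, `s < d i`, one of `range e`; rank-nullity forces equality in both. -/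
theorem finrank_ker_eq_card_of_cyclicFamily {ι : Type*} [Fintype ι] [FiniteDimensional k V]
    {w : ι → V} {d : ι → ℕ} (h1 : ∀ i, (e ^ (d i + 1)) (w i) = 0)
    (hli : LinearIndependent k (e.cyclicFamily w d))
    (hspan : span k (Set.range (e.cyclicFamily w d)) = ⊤) :
    finrank k (LinearMap.ker e) = Fintype.card ι := by
  let top : ι → Σ i, Fin (d i + 1) := fun i => ⟨i, Fin.last _⟩
  let shift : (Σ i, Fin (d i)) → Σ i, Fin (d i + 1) := Sigma.map id fun _ => Fin.succ
  have htop : Function.Injective top := fun i j h => congrArg Sigma.fst h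
  have hshift : Function.Injective shift :=
    Function.injective_id.sigma_map fun _ => Fin.succ_injective _
  have hker : Fintype.card ι ≤ finrank k (LinearMap.ker e) := by
    rw [← finrank_span_eq_card (hli.comp top htop)]
    refine Submodule.finrank_mono (span_le.mpr ?_)
    rintro _ ⟨i, rfl⟩
    exact (pow_succ_apply' _ _).symm.trans (h1 i)
  have hrange : ∑ i, d i ≤ finrank k (LinearMap.range e) := by
    have hcard : Fintype.card (Σ i, Fin (d i)) = ∑ i, d i := by simp [Fintype.card_sigma]
    rw [← hcard, ← finrank_span_eq_card (hli.comp shift hshift)]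
    refine Submodule.finrank_mono (span_le.mpr ?_)
    rintro _ ⟨p, rfl⟩
    exact ⟨_, (pow_succ_apply' _ _).symm⟩
  have hV : finrank k V = ∑ i, d i + Fintype.card ι := by
    rw [← finrank_top, ← hspan, finrank_span_eq_card hli, Fintype.card_sigma]
    simp [Finset.sum_add_distrib]
  have := LinearMap.finrank_range_add_finrank_ker e
  omega

theorem exists_cyclic_vector (hB : B.IsSymm) (htwo : (2 : k) ≠ 0) (he : B.IsSelfAdjoint e)
    (hnil : IsNilpotent e) {W : Submodule k V} (hWe : W ∈ e.invtSubmodule)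
    (hW : Disjoint W (B.orthogonal W)) (hne : W ≠ ⊥) :
    ∃ w ∈ W, ∃ d, (e ^ (d + 1)) w = 0 ∧ B w ((e ^ d) w) ≠ 0 := by
  obtain ⟨d, hd, v, hv, hdv⟩ := exists_pow_succ_apply_eq_zero_of_ne_bot hnil hne
  obtain ⟨w, hw, hBw⟩ := exists_apply_self_ne_zero_of_isSelfAdjoint hB htwo (he.pow d) hW hv
    (pow_apply_mem_of_mem_invtSubmodule hWe hv d) hdv
  exact ⟨w, hw, d, hd w hw, hBw⟩

theorem exists_orthogonal_cyclic_decomposition [FiniteDimensional k V] (hB : B.IsSymm)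
    (htwo : (2 : k) ≠ 0) (he : B.IsSelfAdjoint e) (hnil : IsNilpotent e) (W : Submodule k V)
    (hWe : W ∈ e.invtSubmodule) (hW : Disjoint W (B.orthogonal W)) :
    ∃ (m : ℕ) (w : Fin m → V) (d : Fin m → ℕ),
      (∀ i, (e ^ (d i + 1)) (w i) = 0) ∧ (∀ i, B (w i) ((e ^ d i) (w i)) ≠ 0) ∧
      (∀ i j, i ≠ j → ∀ s t : ℕ, B ((e ^ s) (w i)) ((e ^ t) (w j)) = 0) ∧
      ⨆ i, e.cyclicSpan (w i) (d i) = W := by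
  induction hn : finrank k W using Nat.strong_induction_on generalizing W with
  | _ n ih =>
  rcases eq_or_ne W ⊥ with rfl | hne
  · exact ⟨0, Fin.elim0, Fin.elim0, fun i => i.elim0, fun i => i.elim0, fun i => i.elim0,
      by simp⟩
  obtain ⟨w₀, hw₀, d₀, h1, h2⟩ := exists_cyclic_vector hB htwo he hnil hWe hW hne
  set W₀ := e.cyclicSpan w₀ d₀
  set W₁ := W ⊓ B.orthogonal W₀
  have hle : W₀ ≤ W := cyclicSpan_le hWe hw₀ d₀
  have hW₀ : Disjoint W₀ (B.orthogonal W₀) := disjoint_cyclicSpan_orthogonal he h1 h2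
  have hW₀ne : W₀ ≠ ⊥ :=
    (Submodule.ne_bot_iff _).mpr ⟨w₀, by simpa using pow_apply_mem_cyclicSpan h1 0,
      fun h => h2 (by simp [h])⟩
  obtain ⟨m, w, d, hd1, hd2, horth, hsup⟩ := ih _ (hn ▸ finrank_inf_orthogonal_lt hle hW₀ hW₀ne)
    W₁ (e.invtSubmodule.inf_mem hWe <|
      orthogonal_mem_invtSubmodule he (cyclicSpan_mem_invtSubmodule h1))
    (disjoint_inf_orthogonal hB.isRefl hle hW₀ hW) rfl
  have hW₁ (s : ℕ) (j : Fin m) (t : ℕ) : B ((e ^ s) w₀) ((e ^ t) (w j)) = 0 := by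
    have hmem : (e ^ t) (w j) ∈ W₁ :=
      hsup ▸ le_iSup (fun i => e.cyclicSpan (w i) (d i)) j (pow_apply_mem_cyclicSpan (hd1 j) t)
    exact (mem_inf.mp hmem).2 _ (pow_apply_mem_cyclicSpan h1 s)
  refine ⟨m + 1, Fin.cons w₀ w, Fin.cons d₀ d, Fin.cases h1 hd1, Fin.cases h2 hd2, ?_, ?_⟩
  · intro i j hij s t
    induction i using Fin.cases <;> induction j using Fin.cases
    · exact absurd rfl hij
    · exact hW₁ s _ t
    · exact (hB.eq _ _).trans (hW₁ t _ s)
    · exact horth _ _ (fun h => hij (congrArg Fin.succ h)) s t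
  · rw [iSup_fin_succ]
    simpa only [Fin.cons_zero, Fin.cons_succ, hsup] using sup_inf_orthogonal_eq hB.isRefl hle hW₀

end Module.End

open Module.End in
theorem adapted_cyclic_vectors_orthogonal_general
    {k V : Type*} [Field k] [CharZero k]
    [AddCommGroup V] [Module k V] [FiniteDimensional k V]
    (B : V →ₗ[k] V →ₗ[k] k)
    (hBnd : ∀ v : V, (∀ w : V, B v w = 0) → v = 0)
    (hBsymm : ∀ v w : V, B v w = B w v)
    (e : Module.End k V) (hnil : IsNilpotent e)
    (he : ∀ v w : V, B (e v) w = B v (e w)) :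
    ∃ (m : ℕ), m = finrank k ↥(LinearMap.ker e) ∧
    ∃ (w : Fin m → V) (d : Fin m → ℕ),
      (∀ i, (e ^ (d i + 1)) (w i) = 0) ∧
      LinearIndependent k
        (fun p : Σ i : Fin m, Fin (d i + 1) => (e ^ (p.2 : ℕ)) (w p.1)) ∧
      Submodule.span k
        (Set.range fun p : Σ i : Fin m, Fin (d i + 1) => (e ^ (p.2 : ℕ)) (w p.1)) = ⊤ ∧
      (∀ i j : Fin m, i ≠ j → ∀ s t : ℕ, s ≤ d i → t ≤ d j →
        B ((e ^ s) (w i)) ((e ^ t) (w j)) = 0) ∧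
      (∀ i : Fin m,
        ∀ v ∈ Submodule.span k {x : V | ∃ s : ℕ, s ≤ d i ∧ x = (e ^ s) (w i)},
          (∀ u ∈ Submodule.span k {x : V | ∃ s : ℕ, s ≤ d i ∧ x = (e ^ s) (w i)},
            B v u = 0) → v = 0) := by
  have htop : Disjoint ⊤ (LinearMap.BilinForm.orthogonal B ⊤) :=
    disjoint_def.mpr fun v _ hv => hBnd v fun w => (hBsymm v w).trans (hv w mem_top)
  obtain ⟨m, w, d, h1, h2, horth, hsup⟩ := exists_orthogonal_cyclic_decomposition ⟨hBsymm⟩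
    two_ne_zero he hnil ⊤ (invtSubmodule.top_mem e) htop
  have hli := linearIndependent_cyclicFamily he h1 h2 horth
  have hspan : span k (Set.range (e.cyclicFamily w d)) = ⊤ :=
    (span_range_cyclicFamily w d).trans hsup
  refine ⟨m, ((finrank_ker_eq_card_of_cyclicFamily h1 hli hspan).trans (Fintype.card_fin m)).symm,
    w, d, h1, hli, hspan, fun i j hij s t _ _ => horth i j hij s t, fun i v hv hvB => ?_⟩
  rw [span_setOf_pow_apply_eq_cyclicSpan] at hv hvB
  exact disjoint_def.mp (disjoint_cyclicSpan_orthogonal he (h1 i) (h2 i)) v hv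
    fun u hu => (hBsymm u v).trans (hvB u hu)

theorem adapted_cyclic_vectors_orthogonal
    {k V : Type*} [Field k] [IsAlgClosed k] [CharZero k]
    [AddCommGroup V] [Module k V] [FiniteDimensional k V]
    (B : V →ₗ[k] V →ₗ[k] k)
    (hBnd : ∀ v : V, (∀ w : V, B v w = 0) → v = 0)
    (hBsymm : ∀ v w : V, B v w = B w v)
    (e : Module.End k V) (hnil : IsNilpotent e)
    (he : ∀ v w : V, B (e v) w = B v (e w)) :
    ∃ (m : ℕ), m = finrank k ↥(LinearMap.ker e) ∧
    ∃ (w : Fin m → V) (d : Fin m → ℕ),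
      (∀ i, (e ^ (d i + 1)) (w i) = 0) ∧
      LinearIndependent k
        (fun p : Σ i : Fin m, Fin (d i + 1) => (e ^ (p.2 : ℕ)) (w p.1)) ∧
      Submodule.span k
        (Set.range fun p : Σ i : Fin m, Fin (d i + 1) => (e ^ (p.2 : ℕ)) (w p.1)) = ⊤ ∧
      (∀ i j : Fin m, i ≠ j → ∀ s t : ℕ, s ≤ d i → t ≤ d j →
        B ((e ^ s) (w i)) ((e ^ t) (w j)) = 0) ∧
      (∀ i : Fin m,
        ∀ v ∈ Submodule.span k {x : V | ∃ s : ℕ, s ≤ d i ∧ x = (e ^ s) (w i)},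
          (∀ u ∈ Submodule.span k {x : V | ∃ s : ℕ, s ≤ d i ∧ x = (e ^ s) (w i)},
            B v u = 0) → v = 0) :=
  adapted_cyclic_vectors_orthogonal_general B hBnd hBsymm e hnil he
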